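/- arXiv:2507.10352 — 2 statements merged into one kernel-verified Lean document; each statement's English description precedes it below -/
import Mathlib

section
/- For all real x and y: x·y ≥ 0 and y²(1 + (cx)²) = (cx)² (with c > 0 fixed) hold if and only if y = cx / sqrt(1 + (cx)²). That is, the graph of λ̂_tanh is exactly the semialgebraic set {(x,y) : xy ≥ 0, y²(1 + (cx)²) = (cx)²}. -/
lemma eq_iff_mul_nonneg_and_sq_eq {u a : ℝ} : u = a ↔ 0 ≤ a * u ∧ u ^ 2 = a ^ 2 := by
  refine ⟨fun h => h ▸ ⟨mul_self_nonneg u, rfl⟩, fun ⟨hau, hsq⟩ => ?_⟩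
  rcases sq_eq_sq_iff_eq_or_eq_neg.mp hsq with h | h
  · exact h
  · have ha : a = 0 := by nlinarith
    simp [h, ha]

lemma eq_div_sqrt_iff {y a b : ℝ} (hb : 0 < b) :
    y = a / Real.sqrt b ↔ 0 ≤ a * y ∧ y ^ 2 * b = a ^ 2 := by
  have hs : 0 < Real.sqrt b := Real.sqrt_pos.2 hb
  rw [eq_div_iff hs.ne', eq_iff_mul_nonneg_and_sq_eq, mul_pow, Real.sq_sqrt hb.le, ← mul_assoc,
    mul_nonneg_iff_of_pos_right hs]

theorem tanh_approx_graph (c : ℝ) (hc : 0 < c) :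
    ∀ x y : ℝ,
      (0 ≤ x * y ∧ y ^ 2 * (1 + (c * x) ^ 2) = (c * x) ^ 2) ↔
        y = c * x / Real.sqrt (1 + (c * x) ^ 2) := by
  intro x y
  rw [eq_div_sqrt_iff (by positivity), mul_assoc, mul_nonneg_iff_of_pos_left hc]
end

section
/- Strict Minimum at Origin Lemma: Let X ⊆ ℝⁿ be a set with 0 ∈ X that is invariant under the map F : ℝⁿ → ℝⁿ (i.e., x ∈ X implies F(x) ∈ X), and suppose X is closed. Let V : ℝⁿ → ℝ be continuous and satisfy V(x) - V(F(x)) - ‖x‖² ≥ 0 and V(x) ≥ 0 for all x ∈ X. Then V(0) < V(x) for all x ∈ X with x ≠ 0; equivalently, the set of minimizers of V over X is exactly {0}. -/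
/-!
Along the orbit `x, F x, F² x, …` of a point of `X`, the values of `V` decrease by at least
`‖Fᵏ x‖²` at each step and stay nonnegative, so they converge and the steps `‖Fᵏ x‖²` tend to `0`.
Hence the orbit tends to `0`, and continuity of `V` at `0` gives `V 0 ≤ V (F x)`; one more step
of the decrease yields `V 0 + ‖x‖² ≤ V x`.
-/

open Filter Topology Set

theorem tendsto_zero_of_add_le_of_bddBelow {u a : ℕ → ℝ} (ha : ∀ k, 0 ≤ a k)
    (hu : ∀ k, u (k + 1) + a k ≤ u k) (hbdd : BddBelow (range u)) :
    Tendsto a atTop (𝓝 0) := by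
  have hanti : Antitone u := antitone_nat_of_succ_le fun k => by linarith [ha k, hu k]
  have hlim := tendsto_atTop_ciInf hanti hbdd
  have hgap : Tendsto (fun k => u k - u (k + 1)) atTop (𝓝 0) := by
    simpa using hlim.sub (hlim.comp (tendsto_add_atTop_nat 1))
  exact squeeze_zero ha (fun k => by linarith [hu k]) hgap

theorem setOf_minimizers_eq_singleton {α : Type*} {X : Set α} {V : α → ℝ} {a : α} (ha : a ∈ X)
    (hmin : ∀ x ∈ X, x ≠ a → V a < V x) :
    {x ∈ X | ∀ y ∈ X, V x ≤ V y} = {a} := by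
  ext x
  refine ⟨fun ⟨hx, hxmin⟩ => ?_, ?_⟩
  · by_contra hne
    exact (hmin x hx hne).not_ge (hxmin a ha)
  · rintro rfl
    refine ⟨ha, fun y hy => ?_⟩
    rcases eq_or_ne y x with rfl | hne
    · exact le_rfl
    · exact (hmin y hy hne).le

section Lyapunov

variable {E : Type*} [SeminormedAddCommGroup E] {F : E → E} {X : Set E} {V : E → ℝ}

theorem antitone_comp_iterate (hF : MapsTo F X X) (hdec : ∀ x ∈ X, V (F x) + ‖x‖ ^ 2 ≤ V x)
    {x : E} (hx : x ∈ X) : Antitone fun k => V (F^[k] x) :=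
  antitone_nat_of_succ_le fun k => by
    rw [Function.iterate_succ_apply']
    linarith [hdec _ (hF.iterate k hx), sq_nonneg ‖F^[k] x‖]

theorem tendsto_iterate_zero (hF : MapsTo F X X) (hdec : ∀ x ∈ X, V (F x) + ‖x‖ ^ 2 ≤ V x)
    (hV : ∀ x ∈ X, 0 ≤ V x) {x : E} (hx : x ∈ X) :
    Tendsto (fun k => F^[k] x) atTop (𝓝 0) := by
  have hsq : Tendsto (fun k => ‖F^[k] x‖ ^ 2) atTop (𝓝 0) := by
    refine tendsto_zero_of_add_le_of_bddBelow (u := fun k => V (F^[k] x))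
      (fun k => sq_nonneg _) (fun k => ?_) ⟨0, ?_⟩
    · rw [Function.iterate_succ_apply']
      exact hdec _ (hF.iterate k hx)
    · rintro _ ⟨k, rfl⟩
      exact hV _ (hF.iterate k hx)
  rw [tendsto_zero_iff_norm_tendsto_zero]
  simpa using hsq.sqrt

theorem apply_zero_le (hF : MapsTo F X X) (hdec : ∀ x ∈ X, V (F x) + ‖x‖ ^ 2 ≤ V x)
    (hV : ∀ x ∈ X, 0 ≤ V x) (hVc : ContinuousAt V 0) {x : E} (hx : x ∈ X) : V 0 ≤ V x :=
  (antitone_comp_iterate hF hdec hx).le_of_tendsto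
    (hVc.tendsto.comp (tendsto_iterate_zero hF hdec hV hx)) 0

theorem apply_zero_add_sq_norm_le (hF : MapsTo F X X) (hdec : ∀ x ∈ X, V (F x) + ‖x‖ ^ 2 ≤ V x)
    (hV : ∀ x ∈ X, 0 ≤ V x) (hVc : ContinuousAt V 0) {x : E} (hx : x ∈ X) :
    V 0 + ‖x‖ ^ 2 ≤ V x := by
  linarith [apply_zero_le hF hdec hV hVc (hF hx), hdec x hx]

end Lyapunov

theorem strict_minimum_at_origin_general {n : ℕ}
    (X : Set (EuclideanSpace ℝ (Fin n))) (F : EuclideanSpace ℝ (Fin n) → EuclideanSpace ℝ (Fin n))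
    (V : EuclideanSpace ℝ (Fin n) → ℝ)
    (hX0 : (0 : EuclideanSpace ℝ (Fin n)) ∈ X)
    (hXinv : ∀ x ∈ X, F x ∈ X)
    (hVcont : Continuous V)
    (hVdec : ∀ x ∈ X, V x - V (F x) - ‖x‖ ^ 2 ≥ 0)
    (hVnonneg : ∀ x ∈ X, V x ≥ 0) :
    (∀ x ∈ X, x ≠ 0 → V 0 < V x) ∧
    {x ∈ X | ∀ y ∈ X, V x ≤ V y} = {0} := by
  have hdec : ∀ x ∈ X, V (F x) + ‖x‖ ^ 2 ≤ V x := fun x hx => by linarith [hVdec x hx]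
  have hstrict : ∀ x ∈ X, x ≠ 0 → V 0 < V x := fun x hx hne => by
    have := apply_zero_add_sq_norm_le hXinv hdec hVnonneg hVcont.continuousAt hx
    have : 0 < ‖x‖ ^ 2 := by positivity
    linarith
  exact ⟨hstrict, setOf_minimizers_eq_singleton hX0 hstrict⟩

theorem strict_minimum_at_origin {n : ℕ}
    (X : Set (EuclideanSpace ℝ (Fin n))) (F : EuclideanSpace ℝ (Fin n) → EuclideanSpace ℝ (Fin n))
    (V : EuclideanSpace ℝ (Fin n) → ℝ)
    (hX0 : (0 : EuclideanSpace ℝ (Fin n)) ∈ X)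
    (hXclosed : IsClosed X)
    (hXinv : ∀ x ∈ X, F x ∈ X)
    (hVcont : Continuous V)
    (hVdec : ∀ x ∈ X, V x - V (F x) - ‖x‖ ^ 2 ≥ 0)
    (hVnonneg : ∀ x ∈ X, V x ≥ 0) :
    (∀ x ∈ X, x ≠ 0 → V 0 < V x) ∧
    {x ∈ X | ∀ y ∈ X, V x ≤ V y} = {0} :=
  strict_minimum_at_origin_general X F V hX0 hXinv hVcont hVdec hVnonneg
end
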